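/- arXiv:0912.1185 — 2 statements merged into one kernel-verified Lean document; each statement's English description precedes it below -/
import Mathlib

section
/- Let A ∈ ℂ^{m×n} and b ∈ ℂ^m with b in the range of A. Then the minimum over x ∈ ℂ^n with A x = b of ‖x‖₁ equals the supremum over y ∈ ℂ^m with ‖A*y‖_∞ ≤ 1 of Re(b*y), and the minimum is attained. -/
open Filter Topology Matrix Finset

noncomputable def l1 {ι : Type*} [Fintype ι] (v : ι → ℂ) : ℝ := ∑ i, ‖v i‖

noncomputable def l2sq {ι : Type*} [Fintype ι] (v : ι → ℂ) : ℝ := ∑ i, (‖v i‖)^2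

noncomputable def l2 {ι : Type*} [Fintype ι] (v : ι → ℂ) : ℝ := Real.sqrt (l2sq v)

noncomputable def linf {ι : Type*} [Fintype ι] (v : ι → ℂ) : ℝ := ⨆ i, ‖v i‖

noncomputable def csign (w : ℂ) : ℂ := if w = 0 then 0 else w / (‖w‖ : ℂ)

noncomputable def shrink {ι : Type*} [Fintype ι] (z : ι → ℂ) (ν : ℝ) : ι → ℂ :=
  fun i => ((max (‖z i‖ - ν) 0 : ℝ) : ℂ) * csign (z i)

noncomputable def reInner {ι : Type*} [Fintype ι] (y v : ι → ℂ) : ℝ :=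
  (∑ i, (starRingEnd ℂ) (y i) * v i).re

noncomputable def projBall {ι : Type*} [Fintype ι] (t : ℝ) (v : ι → ℂ) : ι → ℂ :=
  if l2 v ≤ t then v else (t / l2 v) • v

noncomputable def projBox {ι : Type*} [Fintype ι] (v : ι → ℂ) : ι → ℂ :=
  fun i => if ‖v i‖ ≤ 1 then v i else v i / (‖v i‖ : ℂ)

noncomputable def lmax {m n : ℕ} (A : Matrix (Fin m) (Fin n) ℂ) : ℝ :=
  ⨆ i, (Matrix.isHermitian_conjTranspose_mul_self A).eigenvalues i

/-! The minimum exists because `l1` is coercive and the feasible set is closed. Weak duality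
is Hölder's inequality: `Re (b* y) = Re (x* (A* y)) ≤ ‖x‖₁ ‖A* y‖_∞`. Conversely, for `0 < c`
below the optimum, `b` lies outside the compact convex set `A '' {x | ‖x‖₁ ≤ c}`. A separating
`ℂ`-linear functional has real part `v ↦ Re (v* y)`, and the maximum of `Re (x* (A* y))` over
the `ℓ¹`-ball of radius `c` is `c ‖A* y‖_∞`, so a rescaling of `y` is dual feasible with value
above `c`.
-/

section Norms

variable {ι : Type*} [Fintype ι]

lemma l1_eq_norm_toLp (v : ι → ℂ) : l1 v = ‖WithLp.toLp 1 v‖ := by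
  simp [l1, PiLp.norm_eq_of_L1]

lemma continuous_l1 : Continuous (l1 : (ι → ℂ) → ℝ) :=
  (continuous_norm.comp (PiLp.continuous_toLp 1 _)).congr fun v => (l1_eq_norm_toLp v).symm

lemma setOf_l1_le_eq_image (c : ℝ) :
    {x : ι → ℂ | l1 x ≤ c} = WithLp.ofLp '' Metric.closedBall (0 : PiLp 1 fun _ : ι => ℂ) c := by
  ext x
  rw [Set.mem_ofPred_eq, l1_eq_norm_toLp]
  exact ⟨fun h => ⟨WithLp.toLp 1 x, by simpa using h, rfl⟩, by rintro ⟨y, hy, rfl⟩; simpa using hy⟩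

lemma isCompact_setOf_l1_le (c : ℝ) : IsCompact {x : ι → ℂ | l1 x ≤ c} := by
  rw [setOf_l1_le_eq_image]
  exact (isCompact_closedBall _ _).image (PiLp.continuous_ofLp 1 _)

lemma convex_setOf_l1_le (c : ℝ) : Convex ℝ {x : ι → ℂ | l1 x ≤ c} := by
  rw [setOf_l1_le_eq_image]
  exact (convex_closedBall _ _).linear_image (WithLp.linearEquiv 1 ℝ (ι → ℂ)).toLinearMap

lemma exists_isMinOn_l1 {s : Set (ι → ℂ)} (hs : IsClosed s) (hne : s.Nonempty) :
    ∃ x ∈ s, IsMinOn l1 s x := by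
  obtain ⟨x₀, hx₀⟩ := hne
  refine continuous_l1.continuousOn.exists_isMinOn' hs hx₀
    (Filter.Eventually.filter_mono inf_le_left ?_)
  exact mem_cocompact.2
    ⟨_, isCompact_setOf_l1_le (l1 x₀), fun x (hx : ¬l1 x ≤ l1 x₀) => (not_le.1 hx).le⟩

lemma linf_eq_norm (v : ι → ℂ) : linf v = ‖v‖ := by
  refine le_antisymm (Real.iSup_le (norm_le_pi_norm v) (norm_nonneg v)) ?_
  exact (pi_norm_le_iff_of_nonneg (Real.iSup_nonneg fun i => norm_nonneg _)).2
    fun i => le_ciSup (f := fun j => ‖v j‖) (Set.finite_range _).bddAbove i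

end Norms

lemma norm_csign_le_one (z : ℂ) : ‖csign z‖ ≤ 1 := by
  unfold csign
  split_ifs with h
  · simp
  · rw [norm_div, Complex.norm_real, norm_norm, div_self (norm_ne_zero_iff.2 h)]

lemma conj_csign_mul_self (z : ℂ) : starRingEnd ℂ (csign z) * z = ‖z‖ := by
  unfold csign
  split_ifs with h
  · simp [h]
  · have hz : (‖z‖ : ℂ) ≠ 0 := Complex.ofReal_ne_zero.2 (norm_ne_zero_iff.2 h)
    rw [map_div₀, Complex.conj_ofReal, div_mul_eq_mul_div, Complex.conj_mul', div_eq_iff hz, sq]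

section ReInner

variable {ι : Type*} [Fintype ι]

lemma reInner_le_l1_mul_linf (x w : ι → ℂ) : reInner x w ≤ l1 x * linf w := by
  rw [reInner, Complex.re_sum, l1, Finset.sum_mul]
  refine Finset.sum_le_sum fun i _ => (Complex.re_le_norm _).trans ?_
  rw [norm_mul, Complex.norm_conj]
  exact mul_le_mul_of_nonneg_left ((norm_le_pi_norm w i).trans_eq (linf_eq_norm w).symm)
    (norm_nonneg _)

lemma reInner_ofReal_smul_right (r : ℝ) (x y : ι → ℂ) :
    reInner x ((r : ℂ) • y) = r * reInner x y := by
  simp only [reInner, Pi.smul_apply, smul_eq_mul, mul_left_comm _ (r : ℂ), ← Finset.mul_sum,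
    Complex.re_ofReal_mul]

lemma exists_reInner_eq_re (f : (ι → ℂ) →ₗ[ℂ] ℂ) : ∃ y : ι → ℂ, ∀ v, reInner v y = (f v).re := by
  classical
  refine ⟨fun i => starRingEnd ℂ (f fun j => if i = j then 1 else 0), fun v => ?_⟩
  rw [reInner, f.pi_apply_eq_sum_univ v, ← Complex.conj_re, map_sum]
  simp only [smul_eq_mul, map_mul, Complex.conj_conj]

lemma l1_single [DecidableEq ι] (i : ι) (z : ℂ) : l1 (Pi.single i z) = ‖z‖ := by
  rw [l1, Finset.sum_eq_single i (fun j _ hj => by simp [hj]) (by simp)]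
  simp

lemma reInner_single [DecidableEq ι] (i : ι) (z : ℂ) (w : ι → ℂ) :
    reInner (Pi.single i z) w = (starRingEnd ℂ z * w i).re := by
  rw [reInner, Finset.sum_eq_single i (fun j _ hj => by simp [hj]) (by simp)]
  simp

lemma mul_linf_le_of_reInner_le {c u : ℝ} (hc : 0 ≤ c) {w : ι → ℂ}
    (h : ∀ x, l1 x ≤ c → reInner x w ≤ u) : c * linf w ≤ u := by
  classical
  have hu : 0 ≤ u := by simpa [reInner] using h 0 (by simpa [l1] using hc)
  rw [linf, Real.mul_iSup_of_nonneg hc]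
  refine Real.iSup_le (fun i => ?_) hu
  have hx : l1 (Pi.single i ((c : ℂ) * csign (w i))) ≤ c := by
    rw [l1_single, norm_mul, Complex.norm_real, Real.norm_of_nonneg hc]
    exact mul_le_of_le_one_right hc (norm_csign_le_one _)
  simpa [reInner_single, mul_assoc, conj_csign_mul_self, ← Complex.ofReal_mul] using h _ hx

end ReInner

section Matrix

variable {m n : Type*} [Fintype m] [Fintype n]

lemma reInner_mulVec (A : Matrix m n ℂ) (x : n → ℂ) (y : m → ℂ) :
    reInner (A *ᵥ x) y = reInner x (Aᴴ *ᵥ y) := by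
  change (star (A *ᵥ x) ⬝ᵥ y).re = (star x ⬝ᵥ (Aᴴ *ᵥ y)).re
  rw [Matrix.star_mulVec, Matrix.dotProduct_mulVec]

lemma reInner_mulVec_le_l1 {A : Matrix m n ℂ} {y : m → ℂ} (hy : linf (Aᴴ *ᵥ y) ≤ 1)
    (x : n → ℂ) : reInner (A *ᵥ x) y ≤ l1 x := by
  rw [reInner_mulVec]
  exact (reInner_le_l1_mul_linf x _).trans
    (mul_le_of_le_one_right (Finset.sum_nonneg fun _ _ => norm_nonneg _) hy)

lemma exists_linf_le_one_lt_reInner {A : Matrix m n ℂ} {b : m → ℂ} {c : ℝ} (hc : 0 < c)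
    (hbc : ∀ x, A *ᵥ x = b → c < l1 x) :
    ∃ y, linf (Aᴴ *ᵥ y) ≤ 1 ∧ c < reInner b y := by
  set L := A.mulVecLin.restrictScalars ℝ
  set D := L '' {x | l1 x ≤ c}
  have hD : IsClosed D :=
    ((isCompact_setOf_l1_le c).image L.continuous_of_finiteDimensional).isClosed
  have hbD : b ∉ D := by
    rintro ⟨x, hx, rfl⟩
    exact (hbc x rfl).not_ge hx
  obtain ⟨f, u, hfD, hfb⟩ :=
    RCLike.geometric_hahn_banach_closed_point (𝕜 := ℂ) ((convex_setOf_l1_le c).linear_image L)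
      hD hbD
  obtain ⟨y, hy⟩ := exists_reInner_eq_re (f : (m → ℂ) →ₗ[ℂ] ℂ)
  have hu : 0 < u := by simpa using hfD 0 ⟨0, by simpa [l1] using hc.le, map_zero _⟩
  have hyc : c * linf (Aᴴ *ᵥ y) ≤ u := mul_linf_le_of_reInner_le hc.le fun x hx => by
    rw [← reInner_mulVec, hy]
    exact (hfD _ ⟨x, hx, rfl⟩).le
  refine ⟨((c / u : ℝ) : ℂ) • y, ?_, ?_⟩
  · rw [Matrix.mulVec_smul, linf_eq_norm, norm_smul, ← linf_eq_norm, Complex.norm_real,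
      Real.norm_of_nonneg (by positivity), div_mul_eq_mul_div, div_le_one hu]
    exact hyc
  · rw [reInner_ofReal_smul_right, hy, div_mul_eq_mul_div, lt_div_iff₀ hu]
    exact mul_lt_mul_of_pos_left hfb hc

end Matrix

/-- Strong duality between the basis pursuit problem and its dual (2.30);
the primal minimum is attained and equals the dual supremum. -/
theorem strong_duality_bp {m n : ℕ} (A : Matrix (Fin m) (Fin n) ℂ) (b : Fin m → ℂ)
    (hb : ∃ x0 : Fin n → ℂ, A.mulVec x0 = b) :
    ∃ xt : Fin n → ℂ,
      A.mulVec xt = b ∧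
      (∀ x : Fin n → ℂ, A.mulVec x = b → l1 xt ≤ l1 x) ∧
      IsLUB {v : ℝ | ∃ y : Fin m → ℂ, linf (Aᴴ.mulVec y) ≤ 1 ∧ v = reInner b y}
        (l1 xt) := by
  obtain ⟨xt, hxt, hmin⟩ :=
    exists_isMinOn_l1 (isClosed_eq (Matrix.mulVecLin A).continuous_of_finiteDimensional
      continuous_const) hb
  refine ⟨xt, hxt, fun x hx => hmin hx, ?_, fun ub hub => ?_⟩
  · rintro _ ⟨y, hy, rfl⟩
    rw [← hxt]
    exact reInner_mulVec_le_l1 hy xt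
  · have hub0 : 0 ≤ ub := hub ⟨0, by simp [linf], by simp [reInner]⟩
    by_contra! hlt
    obtain ⟨c, hub_c, hc⟩ := exists_between hlt
    obtain ⟨y, hy, hcy⟩ :=
      exists_linf_le_one_lt_reInner (hub0.trans_lt hub_c) fun x hx => hc.trans_le (hmin hx)
    exact (hcy.trans_le (hub ⟨y, hy, rfl⟩)).not_gt hub_c
end

section
/- Let A ∈ ℂ^{m×n}, b ∈ ℂ^m, μ > 0, and let (r̃, x̃) ∈ ℂ^m × ℂ^n satisfy A x̃ + r̃ = b. Then (r̃, x̃) is a solution of min over (x, r) of ‖x‖₁ + (1/(2μ))‖r‖₂² subject to A x + r = b if and only if, setting ỹ = r̃/μ and w = A*ỹ, one has ‖w‖_∞ ≤ 1 and Re(conj(wᵢ)·x̃ᵢ) = |x̃ᵢ| for every index i (i.e., A*ỹ belongs to the subdifferential of ‖·‖₁ at x̃). -/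
open Filter Topology Matrix Finset

/-!
Every feasible pair is `(x̃ + h, r̃ - A h)`, and expanding the square in the objective `F` gives
`F (x̃ + h, r̃ - A h) = F (x̃, r̃) + (‖x̃ + h‖₁ - ‖x̃‖₁ - Re ⟪w, h⟫) + ‖A h‖₂² / (2μ)`.
Hence optimality says `Re ⟪w, h⟫ ≤ ‖x̃ + h‖₁ - ‖x̃‖₁ + O(‖h‖²)` for all `h`.
Replacing `h` by `t • h`, convexity of `‖·‖₁` and `t → 0⁺` remove the quadratic term,
leaving the subgradient inequality; conversely the subgradient inequality and `‖A h‖₂² ≥ 0`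
give optimality. The subgradient inequality for `‖·‖₁` splits over coordinates, and in a real
inner product space `w` is a subgradient of the norm at `a` iff `‖w‖ ≤ 1` and `⟪w, a⟫ = ‖a‖`.
-/

theorem ConvexOn.le_sub_of_forall_mul_le_sub_add_sq {E : Type*} [AddCommGroup E] [Module ℝ E]
    {f : E → ℝ} (hf : ConvexOn ℝ Set.univ f) {x h : E} {a c : ℝ}
    (H : ∀ t : ℝ, 0 < t → t ≤ 1 → t * a ≤ f (x + t • h) - f x + t ^ 2 * c) :
    a ≤ f (x + h) - f x := by
  have hstep : ∀ t : ℝ, 0 < t → t ≤ 1 → a ≤ f (x + h) - f x + t * c := by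
    intro t ht0 ht1
    have hconv : f (x + t • h) ≤ (1 - t) * f x + t * f (x + h) := by
      have hseg := hf.2 (Set.mem_univ x) (Set.mem_univ (x + h)) (sub_nonneg.2 ht1) ht0.le (by ring)
      have hpt : (1 - t) • x + t • (x + h) = x + t • h := by
        rw [smul_add, sub_smul, one_smul]; abel
      simpa only [hpt, smul_eq_mul] using hseg
    nlinarith [H t ht0 ht1]
  have hlim : Tendsto (fun t : ℝ => f (x + h) - f x + t * c) (𝓝[>] 0) (𝓝 (f (x + h) - f x)) := by
    exact (Continuous.tendsto' (by fun_prop) 0 _ (by simp)).mono_left nhdsWithin_le_nhds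
  refine ge_of_tendsto hlim ?_
  filter_upwards [Ioc_mem_nhdsGT one_pos] with t ⟨ht0, ht1⟩ using hstep t ht0 ht1

theorem forall_inner_le_norm_add_sub_norm_iff {F : Type*} [NormedAddCommGroup F]
    [InnerProductSpace ℝ F] (w a : F) :
    (∀ z, inner ℝ w z ≤ ‖a + z‖ - ‖a‖) ↔ ‖w‖ ≤ 1 ∧ inner ℝ w a = ‖a‖ := by
  constructor
  · intro H
    have hw : ‖w‖ ≤ 1 := by
      have hww := H w
      rw [real_inner_self_eq_norm_sq] at hww
      nlinarith [norm_add_le a w, norm_nonneg w]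
    refine ⟨hw, le_antisymm ?_ ?_⟩
    · nlinarith [real_inner_le_norm w a, norm_nonneg a]
    · simpa [inner_neg_right] using H (-a)
  · rintro ⟨hw, hwa⟩ z
    have hsplit : inner ℝ w z = inner ℝ w (a + z) - ‖a‖ := by rw [inner_add_right, hwa]; ring
    nlinarith [real_inner_le_norm w (a + z), norm_nonneg (a + z)]

theorem forall_sum_nonneg_iff_of_map_zero {ι α : Type*} [Fintype ι] [Zero α]
    {φ : ι → α → ℝ} (hφ : ∀ i, φ i 0 = 0) :
    (∀ h : ι → α, 0 ≤ ∑ i, φ i (h i)) ↔ ∀ i z, 0 ≤ φ i z := by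
  classical
  refine ⟨fun H i z => ?_, fun H h => Finset.sum_nonneg fun i _ => H i (h i)⟩
  have hsingle : ∑ j, φ j ((Pi.single i z : ι → α) j) = φ i z := by
    rw [Finset.sum_eq_single i (fun j _ hj => by rw [Pi.single_eq_of_ne hj, hφ])
      (by simp), Pi.single_eq_same]
  simpa only [hsingle] using H (Pi.single i z)

section Norms

variable {ι : Type*} [Fintype ι]

theorem convexOn_l1 : ConvexOn ℝ Set.univ (l1 : (ι → ℂ) → ℝ) := by
  refine ⟨convex_univ, fun x _ y _ a b ha hb _ => ?_⟩
  simp only [l1, smul_eq_mul, Finset.mul_sum, ← Finset.sum_add_distrib, Pi.add_apply]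
  refine Finset.sum_le_sum fun i _ => (norm_add_le _ _).trans_eq ?_
  simp [abs_of_nonneg ha, abs_of_nonneg hb]

theorem linf_le_iff {v : ι → ℂ} {c : ℝ} (hc : 0 ≤ c) :
    linf v ≤ c ↔ ∀ i, ‖v i‖ ≤ c :=
  ⟨fun h i => (le_ciSup (Finite.bddAbove_range _) i).trans h, fun h => Real.iSup_le h hc⟩

theorem reInner_eq_sum_inner (y v : ι → ℂ) :
    reInner y v = ∑ i, inner ℝ (y i) (v i) := by
  simp only [reInner, Complex.re_sum, Complex.inner, mul_comm]

theorem reInner_smul_right (y v : ι → ℂ) (t : ℝ) :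
    reInner y (t • v) = t * reInner y v := by
  simp only [reInner_eq_sum_inner, Pi.smul_apply, real_inner_smul_right, Finset.mul_sum]

theorem reInner_smul_left (y v : ι → ℂ) (t : ℝ) :
    reInner (t • y) v = t * reInner y v := by
  simp only [reInner_eq_sum_inner, Pi.smul_apply, real_inner_smul_left, Finset.mul_sum]

theorem reInner_conjTranspose_mulVec {m n : Type*} [Fintype m] [Fintype n]
    (A : Matrix m n ℂ) (y : m → ℂ) (v : n → ℂ) :
    reInner (Aᴴ *ᵥ y) v = reInner y (A *ᵥ v) := by
  have h : star (Aᴴ *ᵥ y) ⬝ᵥ v = star y ⬝ᵥ (A *ᵥ v) := by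
    rw [star_mulVec, conjTranspose_conjTranspose, dotProduct_mulVec]
  simpa [reInner, dotProduct] using congrArg Complex.re h

theorem l2sq_nonneg (v : ι → ℂ) : 0 ≤ l2sq v :=
  Finset.sum_nonneg fun _ _ => sq_nonneg _

theorem l2sq_smul (t : ℝ) (v : ι → ℂ) : l2sq (t • v) = t ^ 2 * l2sq v := by
  simp only [l2sq, Pi.smul_apply, norm_smul, Real.norm_eq_abs, mul_pow, sq_abs, Finset.mul_sum]

theorem l2sq_sub (u v : ι → ℂ) :
    l2sq (u - v) = l2sq u - 2 * reInner u v + l2sq v := by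
  simp only [l2sq, reInner_eq_sum_inner, Pi.sub_apply, norm_sub_sq_real, Finset.sum_add_distrib,
    Finset.sum_sub_distrib, Finset.mul_sum]

theorem forall_reInner_le_l1_add_sub_l1_iff (w xt : ι → ℂ) :
    (∀ h, reInner w h ≤ l1 (xt + h) - l1 xt) ↔
      linf w ≤ 1 ∧ ∀ i, ((starRingEnd ℂ) (w i) * xt i).re = ‖xt i‖ := by
  have hsum : ∀ h, reInner w h ≤ l1 (xt + h) - l1 xt ↔
      0 ≤ ∑ i, (‖xt i + h i‖ - ‖xt i‖ - inner ℝ (w i) (h i)) := fun h => by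
    simp only [reInner_eq_sum_inner, l1, Pi.add_apply, Finset.sum_sub_distrib, sub_nonneg]
  rw [forall_congr' hsum, forall_sum_nonneg_iff_of_map_zero
    (φ := fun i z => ‖xt i + z‖ - ‖xt i‖ - inner ℝ (w i) z) (by simp), linf_le_iff zero_le_one,
    ← forall_and]
  refine forall_congr' fun i => ?_
  rw [mul_comm, ← Complex.inner, ← forall_inner_le_norm_add_sub_norm_iff]
  simp only [sub_nonneg]

end Norms

section QuadraticProgram

variable {m n : Type*} [Fintype m] [Fintype n] (A : Matrix m n ℂ) (μ : ℝ) (rt : m → ℂ) (xt : n → ℂ)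

theorem l1_add_l2sq_sub_mulVec (h : n → ℂ) :
    l1 (xt + h) + 1 / (2 * μ) * l2sq (rt - A *ᵥ h) =
      l1 xt + 1 / (2 * μ) * l2sq rt
        + (l1 (xt + h) - l1 xt - reInner (Aᴴ *ᵥ ((1 / μ) • rt)) h)
        + 1 / (2 * μ) * l2sq (A *ᵥ h) := by
  rw [l2sq_sub, reInner_conjTranspose_mulVec, reInner_smul_left]
  ring

theorem forall_feasible_le_iff {b : m → ℂ} (hfeas : A *ᵥ xt + rt = b) :
    (∀ (x : n → ℂ) (r : m → ℂ), A *ᵥ x + r = b →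
        l1 xt + 1 / (2 * μ) * l2sq rt ≤ l1 x + 1 / (2 * μ) * l2sq r) ↔
      ∀ h, reInner (Aᴴ *ᵥ ((1 / μ) • rt)) h ≤
        l1 (xt + h) - l1 xt + 1 / (2 * μ) * l2sq (A *ᵥ h) := by
  constructor
  · intro H h
    have hle := H (xt + h) (rt - A *ᵥ h) (by rw [mulVec_add]; linear_combination hfeas)
    rw [l1_add_l2sq_sub_mulVec] at hle
    linarith
  · intro H x r hxr
    have hr : r = rt - A *ᵥ (x - xt) := by rw [mulVec_sub]; linear_combination hxr - hfeas
    have hdecomp := l1_add_l2sq_sub_mulVec A μ rt xt (x - xt)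
    have hineq := H (x - xt)
    rw [add_sub_cancel, ← hr] at hdecomp
    rw [add_sub_cancel] at hineq
    linarith

end QuadraticProgram

/-- Optimality conditions (A.1) for problem (2.9): a feasible pair (r̃, x̃) is a solution
iff, with ỹ = r̃/μ, the vector A*ỹ lies in the subdifferential of ‖·‖₁ at x̃. -/
theorem qp_optimality_conditions {m n : ℕ} (A : Matrix (Fin m) (Fin n) ℂ)
    (b : Fin m → ℂ) (μ : ℝ) (hμ : 0 < μ)
    (rt : Fin m → ℂ) (xt : Fin n → ℂ) (hfeas : A.mulVec xt + rt = b) :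
    let w : Fin n → ℂ := Aᴴ.mulVec ((1/μ) • rt)
    ((∀ (x : Fin n → ℂ) (r : Fin m → ℂ), A.mulVec x + r = b →
        l1 xt + (1/(2*μ)) * l2sq rt ≤ l1 x + (1/(2*μ)) * l2sq r) ↔
      (linf w ≤ 1 ∧ ∀ i : Fin n, ((starRingEnd ℂ) (w i) * xt i).re = ‖xt i‖)) := by
  intro w
  rw [forall_feasible_le_iff A μ rt xt hfeas, ← forall_reInner_le_l1_add_sub_l1_iff]
  constructor
  · intro hopt h
    refine convexOn_l1.le_sub_of_forall_mul_le_sub_add_sq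
      (c := 1 / (2 * μ) * l2sq (A *ᵥ h)) fun t _ _ => ?_
    simpa only [reInner_smul_right, mulVec_smul A, l2sq_smul, mul_left_comm _ (t ^ 2)]
      using hopt (t • h)
  · intro hsub h
    have hquad : 0 ≤ 1 / (2 * μ) * l2sq (A *ᵥ h) := by have := l2sq_nonneg (A *ᵥ h); positivity
    linarith [hsub h]
end
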